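/- arXiv:2005.03766 — 5 statements merged into one kernel-verified Lean document; each statement's English description precedes it below -/
import Mathlib

section
/- The sequence defined by t_1 = 1 and t_{k+1} = (1 + sqrt(1 + 4 t_k^2))/2 satisfies 1/t_k ≤ 2/(k+1) for all k ≥ 1 (equivalently, t_k ≥ (k+1)/2). -/
/-! Each step `x ↦ (1 + √(1 + 4x²))/2` raises `x` by at least `1/2`, because `√(1 + 4x²) ≥ 2x`;
starting from `t 1 = 1` this gives `t k ≥ (k + 1)/2`, and inverting gives the bound. -/

theorem add_half_le_fista_step (x : ℝ) : x + 1 / 2 ≤ (1 + Real.sqrt (1 + 4 * x ^ 2)) / 2 := by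
  have h : 2 * x ≤ Real.sqrt (1 + 4 * x ^ 2) :=
    Real.le_sqrt_of_sq_le (by nlinarith)
  linarith

theorem half_succ_le_of_add_half_le_succ (t : ℕ → ℝ) (h1 : t 1 = 1)
    (hstep : ∀ k : ℕ, 1 ≤ k → t k + 1 / 2 ≤ t (k + 1)) :
    ∀ k : ℕ, 1 ≤ k → ((k : ℝ) + 1) / 2 ≤ t k := by
  intro k hk
  induction k, hk using Nat.le_induction with
  | base => norm_num [h1]
  | succ n hn ih =>
    push_cast
    linarith [hstep n hn]

/-- The FISTA stepsize sequence `t 1 = 1`, `t (k+1) = (1 + √(1 + 4 t k ^ 2))/2`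
satisfies `1 / t k ≤ 2 / (k + 1)` for all `k ≥ 1`. -/
theorem fista_t_lower_bound (t : ℕ → ℝ) (h1 : t 1 = 1)
    (hrec : ∀ k : ℕ, 1 ≤ k → t (k + 1) = (1 + Real.sqrt (1 + 4 * t k ^ 2)) / 2) :
    ∀ k : ℕ, 1 ≤ k → 1 / t k ≤ 2 / ((k : ℝ) + 1) := by
  intro k hk
  have hlower : ((k : ℝ) + 1) / 2 ≤ t k :=
    half_succ_le_of_add_half_le_succ t h1
      (fun n hn => hrec n hn ▸ add_half_le_fista_step (t n)) k hk
  calc 1 / t k ≤ 1 / (((k : ℝ) + 1) / 2) := one_div_le_one_div_of_le (by positivity) hlower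
    _ = 2 / ((k : ℝ) + 1) := one_div_div _ _
end

section
/- Let f : E → ℝ be convex differentiable with L-Lipschitz gradient and g : E → ℝ ∪ {+∞} proper closed convex; let F = f + g. Fix τ ∈ (0,1], α ∈ [0, (1-τ)L/τ], y ∈ E, and suppose (x, v, ε) satisfies v ∈ ∂_ε g(x) + (L/τ)(x - y) + ∇f(y) and ‖τv‖² + 2τεL ≤ L[(1-τ)L - ατ]‖x - y‖². Then for every z ∈ E: F(z) - F(x) ≥ (L/(2τ))[‖x - z - (τ/L)v‖² - ‖y - z‖²] + (α/2)‖y - x‖². -/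
/-!
Convexity of `f` at `y` together with the descent lemma for its `L`-Lipschitz gradient gives
`f x + ⟪∇f(y), z - x⟫ ≤ f z + (L/2)‖x - y‖²`, and the `ε`-subgradient inequality of `g` at `x`
absorbs the term `⟪∇f(y), z - x⟫`. Expanding the two squared norms, what remains is an
inequality between `‖v‖²`, `‖x - y‖²` and `ε` alone, namely the error condition divided by `2Lτ`.
-/

noncomputable section

/-- The ε-subdifferential of an extended-real-valued function `g` at `x`:
`∂_ε g(x) = {u | ∀ z, g z ≥ g x + ⟨u, z - x⟩ - ε}`. -/
def epsSubdiff {E : Type*} [NormedAddCommGroup E] [InnerProductSpace ℝ E]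
    (g : E → EReal) (ε : ℝ) (x : E) : Set E :=
  {u | ∀ z : E, g x + (((inner ℝ u (z - x) : ℝ) - ε : ℝ) : EReal) ≤ g z}

def ProperFn {E : Type*} (g : E → EReal) : Prop :=
  (∃ x, g x ≠ ⊤) ∧ ∀ x, g x ≠ ⊥

def ConvexFn {E : Type*} [NormedAddCommGroup E] [Module ℝ E] (g : E → EReal) : Prop :=
  ∀ x y : E, ∀ a b : ℝ, 0 ≤ a → 0 ≤ b → a + b = 1 →
    g (a • x + b • y) ≤ (a : EReal) * g x + (b : EReal) * g y

open Set AffineMap RealInnerProductSpace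

lemma le_add_deriv_add_half_of_deriv_sub_le {φ φ' : ℝ → ℝ} {K : ℝ}
    (hφ : ∀ t ∈ Icc (0 : ℝ) 1, HasDerivAt φ (φ' t) t)
    (hK : ∀ t ∈ Ioo (0 : ℝ) 1, φ' t - φ' 0 ≤ K * t) :
    φ 1 ≤ φ 0 + φ' 0 + K / 2 := by
  set ψ : ℝ → ℝ := fun t => φ t - t * φ' 0 - K / 2 * t ^ 2
  have hψ : ∀ t ∈ Icc (0 : ℝ) 1, HasDerivAt ψ (φ' t - φ' 0 - K * t) t := fun t ht => by
    refine (((hφ t ht).sub ((hasDerivAt_id' t).mul_const (φ' 0))).sub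
      ((hasDerivAt_pow 2 t).const_mul (K / 2))).congr_deriv ?_
    push_cast
    ring
  have hanti : AntitoneOn ψ (Icc 0 1) := by
    refine antitoneOn_of_hasDerivWithinAt_nonpos (f' := fun t => φ' t - φ' 0 - K * t)
      (convex_Icc 0 1)
      (fun t ht => (hψ t ht).continuousAt.continuousWithinAt) (fun t ht => ?_) (fun t ht => ?_)
    · rw [interior_Icc] at ht ⊢
      exact (hψ t (Ioo_subset_Icc_self ht)).hasDerivWithinAt
    · rw [interior_Icc] at ht
      linarith [hK t ht]
  have := hanti (left_mem_Icc.2 zero_le_one) (right_mem_Icc.2 zero_le_one) zero_le_one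
  simp only [ψ] at this
  linarith

section Gradient

variable {E : Type*} [NormedAddCommGroup E] [InnerProductSpace ℝ E] [CompleteSpace E]
  {f : E → ℝ} {f' : E → E} {L : ℝ}

lemma HasGradientAt.hasDerivAt_comp_lineMap {g x y : E} {t : ℝ}
    (h : HasGradientAt f g (lineMap y x t)) :
    HasDerivAt (f ∘ (lineMap y x : ℝ →ᵃ[ℝ] E)) ⟪g, x - y⟫ t := by
  simpa using h.hasFDerivAt.comp_hasDerivAt t hasDerivAt_lineMap

lemma ConvexOn.add_inner_le_of_hasGradientAt {s : Set E} (hf : ConvexOn ℝ s f) {g y z : E}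
    (hy : y ∈ s) (hz : z ∈ s) (h : HasGradientAt f g y) : f y + ⟪g, z - y⟫ ≤ f z := by
  have hφ := hf.comp_affineMap (lineMap y z : ℝ →ᵃ[ℝ] E)
  have hφ' : HasDerivAt (f ∘ (lineMap y z : ℝ →ᵃ[ℝ] E)) ⟪g, z - y⟫ 0 :=
    HasGradientAt.hasDerivAt_comp_lineMap (by simpa using h)
  have := hφ.le_slope_of_hasDerivAt (by simpa using hy) (by simpa using hz) one_pos hφ'
  simp only [slope, sub_zero, inv_one, Function.comp_apply, lineMap_apply_one,
    lineMap_apply_zero, vsub_eq_sub, smul_eq_mul, one_mul] at this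
  linarith

lemma descent_lemma (hgrad : ∀ x, HasGradientAt f (f' x) x)
    (hlip : ∀ a b, ‖f' a - f' b‖ ≤ L * ‖a - b‖) (x y : E) :
    f x ≤ f y + ⟪f' y, x - y⟫ + L / 2 * ‖x - y‖ ^ 2 := by
  have hφ : ∀ t ∈ Icc (0 : ℝ) 1, HasDerivAt (f ∘ (lineMap y x : ℝ →ᵃ[ℝ] E))
      ⟪f' (lineMap y x t), x - y⟫ t := fun t _ => (hgrad _).hasDerivAt_comp_lineMap
  have hK : ∀ t ∈ Ioo (0 : ℝ) 1,
      ⟪f' (lineMap y x t), x - y⟫ - ⟪f' (lineMap y x (0 : ℝ)), x - y⟫ ≤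
        L * ‖x - y‖ ^ 2 * t := fun t ht => by
    have hdist : ‖lineMap y x t - y‖ = t * ‖x - y‖ := by
      rw [← vsub_eq_sub, lineMap_vsub_left, norm_smul, Real.norm_of_nonneg ht.1.le, vsub_eq_sub]
    calc ⟪f' (lineMap y x t), x - y⟫ - ⟪f' (lineMap y x (0 : ℝ)), x - y⟫
        = ⟪f' (lineMap y x t) - f' y, x - y⟫ := by simp [inner_sub_left]
      _ ≤ ‖f' (lineMap y x t) - f' y‖ * ‖x - y‖ := real_inner_le_norm _ _
      _ ≤ L * (t * ‖x - y‖) * ‖x - y‖ := by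
        gcongr
        exact hdist ▸ hlip _ _
      _ = L * ‖x - y‖ ^ 2 * t := by ring
  have := le_add_deriv_add_half_of_deriv_sub_le hφ hK
  simp only [Function.comp_apply, lineMap_apply_zero, lineMap_apply_one] at this
  linarith

lemma add_inner_le_add_of_convexOn_of_lipschitz_gradient (hf : ConvexOn ℝ univ f)
    (hgrad : ∀ x, HasGradientAt f (f' x) x) (hlip : ∀ a b, ‖f' a - f' b‖ ≤ L * ‖a - b‖)
    (x y z : E) : f x + ⟪f' y, z - x⟫ ≤ f z + L / 2 * ‖x - y‖ ^ 2 := by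
  have hconv := hf.add_inner_le_of_hasGradientAt (mem_univ y) (mem_univ z) (hgrad y)
  have hsplit : ⟪f' y, z - y⟫ = ⟪f' y, z - x⟫ + ⟪f' y, x - y⟫ := by
    rw [← inner_add_right, sub_add_sub_cancel]
  linarith [descent_lemma hgrad hlip x y]

end Gradient

section InnerProductSpace

variable {E : Type*} [NormedAddCommGroup E] [InnerProductSpace ℝ E]

lemma IR_quadratic_bound {L τ α ε : ℝ} (hL : 0 < L) (hτ : 0 < τ) {x y v : E}
    (herr : ‖τ • v‖ ^ 2 + 2 * τ * ε * L ≤ L * ((1 - τ) * L - α * τ) * ‖x - y‖ ^ 2) (z : E) :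
    L / (2 * τ) * (‖x - z - (τ / L) • v‖ ^ 2 - ‖y - z‖ ^ 2) + α / 2 * ‖y - x‖ ^ 2
      + L / 2 * ‖x - y‖ ^ 2 + ε ≤ ⟪v - (L / τ) • (x - y), z - x⟫ := by
  have e1 : ‖x - z - (τ / L) • v‖ ^ 2
      = ‖x - z‖ ^ 2 - 2 * (τ / L) * ⟪x - z, v⟫ + (τ / L) ^ 2 * ‖v‖ ^ 2 := by
    rw [norm_sub_sq_real, real_inner_smul_right, norm_smul, Real.norm_eq_abs, mul_pow, sq_abs]
    ring
  have e2 : ‖y - z‖ ^ 2 = ‖x - z‖ ^ 2 - 2 * ⟪x - z, x - y⟫ + ‖x - y‖ ^ 2 := by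
    rw [← norm_sub_sq_real, sub_sub_sub_cancel_left]
  have e3 : ⟪v - (L / τ) • (x - y), z - x⟫ = -⟪x - z, v⟫ + L / τ * ⟪x - z, x - y⟫ := by
    rw [← neg_sub x z, inner_neg_right, inner_sub_left, real_inner_smul_left,
      real_inner_comm v, real_inner_comm (x - y)]
    ring
  rw [norm_smul, Real.norm_of_nonneg hτ.le, mul_pow] at herr
  rw [e1, e2, e3, norm_sub_rev y x, ← sub_nonneg]
  have hgap : -⟪x - z, v⟫ + L / τ * ⟪x - z, x - y⟫ - (L / (2 * τ) * (‖x - z‖ ^ 2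
      - 2 * (τ / L) * ⟪x - z, v⟫ + (τ / L) ^ 2 * ‖v‖ ^ 2 - (‖x - z‖ ^ 2
      - 2 * ⟪x - z, x - y⟫ + ‖x - y‖ ^ 2)) + α / 2 * ‖x - y‖ ^ 2 + L / 2 * ‖x - y‖ ^ 2 + ε)
      = (L * ((1 - τ) * L - α * τ) * ‖x - y‖ ^ 2 - (τ ^ 2 * ‖v‖ ^ 2 + 2 * τ * ε * L))
        / (2 * L * τ) := by
    field_simp
    ring
  rw [hgap]
  exact div_nonneg (sub_nonneg.2 herr) (by positivity)

end InnerProductSpace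

lemma add_le_add_of_mem_epsSubdiff {E : Type*} [NormedAddCommGroup E] [InnerProductSpace ℝ E]
    {g : E → EReal} {ε : ℝ} {x u z : E} (hu : u ∈ epsSubdiff g ε x) {a b c : ℝ}
    (h : a + b ≤ c + (⟪u, z - x⟫ - ε)) : ((a : EReal) + g x) + b ≤ c + g z := by
  set r := ⟪u, z - x⟫ - ε
  calc ((a : EReal) + g x) + b = (g x + r) + (a + b - r : ℝ) := by
        rw [add_right_comm, add_comm _ (g x), add_assoc, ← EReal.coe_add,
          ← EReal.coe_add, add_sub_cancel]
    _ ≤ g z + c := add_le_add (hu z) (EReal.coe_le_coe_iff.2 (by linarith))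
    _ = c + g z := add_comm _ _

theorem IR_key_estimate_general {E : Type*} [NormedAddCommGroup E] [InnerProductSpace ℝ E]
    [FiniteDimensional ℝ E]
    (L τ α : ℝ) (hL : 0 < L) (hτ : 0 < τ ∧ τ ≤ 1)
    (f : E → ℝ) (f' : E → E) (hfconv : ConvexOn ℝ Set.univ f)
    (hgrad : ∀ x : E, HasGradientAt f (f' x) x)
    (hlip : ∀ x y : E, ‖f' x - f' y‖ ≤ L * ‖x - y‖)
    (g : E → EReal)
    (y x v : E) (ε : ℝ)
    (hincl : v - (L / τ) • (x - y) - f' y ∈ epsSubdiff g ε x)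
    (herr : ‖τ • v‖ ^ 2 + 2 * τ * ε * L ≤ L * ((1 - τ) * L - α * τ) * ‖x - y‖ ^ 2) :
    ∀ z : E, ((f x : EReal) + g x) +
        ((L / (2 * τ) * (‖x - z - (τ / L) • v‖ ^ 2 - ‖y - z‖ ^ 2)
          + α / 2 * ‖y - x‖ ^ 2 : ℝ) : EReal)
      ≤ (f z : EReal) + g z := by
  intro z
  refine add_le_add_of_mem_epsSubdiff hincl ?_
  have hsmooth := add_inner_le_add_of_convexOn_of_lipschitz_gradient hfconv hgrad hlip x y z
  have hquad := IR_quadratic_bound hL hτ.1 herr z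
  rw [inner_sub_left]
  linarith

/-- Key estimate for the IR rule (Proposition 4.2): if `(x, v, ε)` satisfies the IR rule
at `y`, then for every `z`,
`F(z) - F(x) ≥ (L/(2τ))[‖x - z - (τ/L)v‖² - ‖y - z‖²] + (α/2)‖y - x‖²`. -/
theorem IR_key_estimate {E : Type*} [NormedAddCommGroup E] [InnerProductSpace ℝ E]
    [FiniteDimensional ℝ E]
    (L τ α : ℝ) (hL : 0 < L) (hτ : 0 < τ ∧ τ ≤ 1) (hα : 0 ≤ α ∧ α ≤ (1 - τ) * L / τ)
    (f : E → ℝ) (f' : E → E) (hfconv : ConvexOn ℝ Set.univ f)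
    (hgrad : ∀ x : E, HasGradientAt f (f' x) x)
    (hlip : ∀ x y : E, ‖f' x - f' y‖ ≤ L * ‖x - y‖)
    (g : E → EReal) (hgp : ProperFn g) (hglsc : LowerSemicontinuous g) (hgconv : ConvexFn g)
    (y x v : E) (ε : ℝ) (hε : 0 ≤ ε)
    (hincl : v - (L / τ) • (x - y) - f' y ∈ epsSubdiff g ε x)
    (herr : ‖τ • v‖ ^ 2 + 2 * τ * ε * L ≤ L * ((1 - τ) * L - α * τ) * ‖x - y‖ ^ 2) :
    ∀ z : E, ((f x : EReal) + g x) +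
        ((L / (2 * τ) * (‖x - z - (τ / L) • v‖ ^ 2 - ‖y - z‖ ^ 2)
          + α / 2 * ‖y - x‖ ^ 2 : ℝ) : EReal)
      ≤ (f z : EReal) + g z :=
  IR_key_estimate_general L τ α hL hτ f f' hfconv hgrad hlip g y x v ε hincl herr
end
end

section
/- In the IER Rule with σ = 0, the conditions force ε = 0, v = (y - x̃)/α, and x̃ = Prox_{(α/(1+αL))g}(y - (α/(1+αL))∇f(y)); i.e., J_e^{α,0}(y, 1/L) is a singleton. -/
noncomputable section

/-!
The condition with `σ = 0` reads `‖α v + x̃ - y‖² + 2αε ≤ 0`, which forces `ε = 0` and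
`v = (y - x̃)/α`. Substituting, the inclusion `v ∈ ∂_ε g(x̃) + L(x̃ - y) + ∇f(y)` becomes
`(w - x̃)/λ ∈ ∂g(x̃)` with `λ = α/(1 + αL)` and `w = y - λ∇f(y)`, which is the optimality
condition of `Prox_{λg}(w)`. The prox point `p` satisfies it (differentiate the prox objective
along the segment from `p`), and it has at most one solution because `∂g` is monotone.
-/

open Filter Topology

lemma EReal.ne_top_of_add_coe_le {a b : EReal} {r : ℝ} (h : a + r ≤ b) (hb : b ≠ ⊤) : a ≠ ⊤ :=
  (EReal.add_ne_top_iff_ne_top_left (EReal.coe_ne_bot r) (EReal.coe_ne_top r)).mp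
    (ne_top_of_le_ne_top hb h)

variable {E : Type*} {g : E → EReal}

namespace ProperFn

lemma coe_toReal (hg : ProperFn g) {x : E} (hx : g x ≠ ⊤) : ((g x).toReal : EReal) = g x :=
  EReal.coe_toReal hx (hg.2 x)

lemma ne_top_of_forall_add_coe_le (hg : ProperFn g) {x : E} {r : E → ℝ}
    (h : ∀ z, g x + (r z : EReal) ≤ g z) : g x ≠ ⊤ := by
  obtain ⟨z, hz⟩ := hg.1
  exact EReal.ne_top_of_add_coe_le (h z) hz

lemma ne_top_of_isMin_add (hg : ProperFn g) {c : E → ℝ} {p : E}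
    (hmin : ∀ z, g p + (c p : EReal) ≤ g z + (c z : EReal)) : g p ≠ ⊤ := by
  obtain ⟨z, hz⟩ := hg.1
  exact EReal.ne_top_of_add_coe_le (hmin z)
    ((EReal.add_ne_top_iff_ne_top_left (EReal.coe_ne_bot _) (EReal.coe_ne_top _)).mpr hz)

end ProperFn

variable [NormedAddCommGroup E] [InnerProductSpace ℝ E]

lemma ProperFn.neg_add_le_inner_sub_of_mem_epsSubdiff (hg : ProperFn g) {x x' u u' : E} {ε ε' : ℝ}
    (hu : u ∈ epsSubdiff g ε x) (hu' : u' ∈ epsSubdiff g ε' x') :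
    -(ε + ε') ≤ inner ℝ (u - u') (x - x') := by
  have h := hu x'
  have h' := hu' x
  rw [← hg.coe_toReal (hg.ne_top_of_forall_add_coe_le hu),
    ← hg.coe_toReal (hg.ne_top_of_forall_add_coe_le hu'), ← EReal.coe_add,
    EReal.coe_le_coe_iff] at h h'
  have hswap : inner ℝ u (x - x') = -inner ℝ u (x' - x) := by rw [← inner_neg_right, neg_sub]
  rw [inner_sub_left, hswap]
  linarith

lemma ConvexFn.apply_add_smul_sub_le_toReal (hconv : ConvexFn g) (hg : ProperFn g) {p z : E}
    (hp : g p ≠ ⊤) (hz : g z ≠ ⊤) {t : ℝ} (ht₀ : 0 ≤ t) (ht₁ : t ≤ 1) :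
    g (p + t • (z - p)) ≤ ((t * (g z).toReal + (1 - t) * (g p).toReal : ℝ) : EReal) := by
  have h := hconv z p t (1 - t) ht₀ (by linarith) (by ring)
  rw [← hg.coe_toReal hz, ← hg.coe_toReal hp] at h
  convert h using 2
  · module
  · norm_cast

lemma norm_add_smul_sub_sub_sq (p z w : E) (t : ℝ) :
    ‖p + t • (z - p) - w‖ ^ 2
      = ‖p - w‖ ^ 2 - 2 * t * inner ℝ (w - p) (z - p) + t ^ 2 * ‖z - p‖ ^ 2 := by
  rw [show p + t • (z - p) - w = (p - w) + t • (z - p) by abel, norm_add_sq_real,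
    real_inner_smul_right, norm_smul, mul_pow, Real.norm_eq_abs, sq_abs, ← neg_sub w p,
    inner_neg_left]
  ring

theorem ConvexFn.mem_epsSubdiff_zero_of_isMin_prox (hconv : ConvexFn g) (hg : ProperFn g)
    {γ : ℝ} {w p : E}
    (hmin : ∀ z, g p + ((1 / (2 * γ) * ‖p - w‖ ^ 2 : ℝ) : EReal)
      ≤ g z + ((1 / (2 * γ) * ‖z - w‖ ^ 2 : ℝ) : EReal)) :
    (1 / γ) • (w - p) ∈ epsSubdiff g 0 p := by
  intro z
  by_cases hz : g z = ⊤
  · simp [hz]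
  have hp : g p ≠ ⊤ := hg.ne_top_of_isMin_add (c := fun z ↦ 1 / (2 * γ) * ‖z - w‖ ^ 2) hmin
  rw [sub_zero, real_inner_smul_left, ← hg.coe_toReal hp, ← hg.coe_toReal hz, ← EReal.coe_add,
    EReal.coe_le_coe_iff]
  have hstep : ∀ t ∈ Set.Ioc (0 : ℝ) 1, (g p).toReal + 1 / γ * inner ℝ (w - p) (z - p)
      ≤ (g z).toReal + t * (‖z - p‖ ^ 2 / (2 * γ)) := by
    rintro t ⟨ht₀, ht₁⟩
    have hmin_t := (hmin (p + t • (z - p))).trans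
      (add_le_add_left (hconv.apply_add_smul_sub_le_toReal hg hp hz ht₀.le ht₁) _)
    rw [← hg.coe_toReal hp, ← EReal.coe_add, ← EReal.coe_add, EReal.coe_le_coe_iff,
      EReal.toReal_coe, norm_add_smul_sub_sub_sq] at hmin_t
    refine le_of_mul_le_mul_left ?_ ht₀
    linear_combination hmin_t
  have hlim : Tendsto (fun t : ℝ ↦ (g z).toReal + t * (‖z - p‖ ^ 2 / (2 * γ))) (𝓝[>] 0)
      (𝓝 (g z).toReal) := by
    have hcont : Continuous fun t : ℝ ↦ (g z).toReal + t * (‖z - p‖ ^ 2 / (2 * γ)) := by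
      fun_prop
    simpa using (hcont.tendsto 0).mono_left nhdsWithin_le_nhds
  exact ge_of_tendsto hlim (eventually_of_mem (Ioc_mem_nhdsGT one_pos) hstep)

lemma ProperFn.eq_of_mem_epsSubdiff_zero_prox (hg : ProperFn g) {γ : ℝ} (hγ : 0 < γ) {w x p : E}
    (hx : (1 / γ) • (w - x) ∈ epsSubdiff g 0 x) (hp : (1 / γ) • (w - p) ∈ epsSubdiff g 0 p) :
    x = p := by
  have h := hg.neg_add_le_inner_sub_of_mem_epsSubdiff hx hp
  rw [← smul_sub, sub_sub_sub_cancel_left, real_inner_smul_left, ← neg_sub x p, inner_neg_left,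
    real_inner_self_eq_norm_sq] at h
  have hn : ‖x - p‖ ^ 2 ≤ 0 := by
    have := one_div_pos.mpr hγ
    nlinarith
  exact sub_eq_zero.mp <| norm_eq_zero.mp <|
    (pow_eq_zero_iff two_ne_zero).mp (hn.antisymm (by positivity))

lemma sq_norm_add_mul_le_zero_iff {F : Type*} [NormedAddCommGroup F] {a : F} {α ε : ℝ}
    (hα : 0 < α) (hε : 0 ≤ ε) :
    ‖a‖ ^ 2 + 2 * α * ε ≤ 0 ↔ a = 0 ∧ ε = 0 := by
  constructor
  · intro h
    have hαε : 0 ≤ α * ε := by positivity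
    have ha : ‖a‖ ^ 2 = 0 := by nlinarith [sq_nonneg ‖a‖]
    refine ⟨norm_eq_zero.mp (pow_eq_zero_iff two_ne_zero |>.mp ha), ?_⟩
    nlinarith
  · rintro ⟨rfl, rfl⟩
    simp

/-- Since `1/α + L = (1 + αL)/α`, this is where the prox step `α/(1 + αL)` comes from. -/
lemma one_div_smul_sub_sub_smul_sub_sub_eq {F : Type*} [AddCommGroup F] [Module ℝ F] {α L : ℝ}
    (hα : α ≠ 0) (hαL : 1 + α * L ≠ 0) (x y d : F) :
    (1 / α) • (y - x) - L • (x - y) - d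
      = (1 / (α / (1 + α * L))) • (y - (α / (1 + α * L)) • d - x) := by
  match_scalars <;> field_simp <;> ring

end

theorem IER_rule_sigma_zero_singleton_general {E : Type*} [NormedAddCommGroup E] [InnerProductSpace ℝ E]
    (L α σ : ℝ) (hL : 0 < L) (hα : 1 / L < α) (hσ : σ = 0)
    (f' : E → E)
    (g : E → EReal) (hgp : ProperFn g) (hgconv : ConvexFn g)
    (y p : E)
    (hprox : ∀ z : E,
        g p + ((1 / (2 * (α / (1 + α * L)))
            * ‖p - (y - (α / (1 + α * L)) • f' y)‖ ^ 2 : ℝ) : EReal)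
        ≤ g z + ((1 / (2 * (α / (1 + α * L)))
            * ‖z - (y - (α / (1 + α * L)) • f' y)‖ ^ 2 : ℝ) : EReal)) :
    {q : E × E × ℝ | 0 ≤ q.2.2 ∧
        q.2.1 - L • (q.1 - y) - f' y ∈ epsSubdiff g q.2.2 q.1 ∧
        ‖α • q.2.1 + q.1 - y‖ ^ 2 + 2 * α * q.2.2 ≤ σ ^ 2 * ‖q.1 - y‖ ^ 2}
      = {(p, (1 / α) • (y - p), (0 : ℝ))} := by
  subst hσ
  have hα₀ : 0 < α := (one_div_pos.mpr hL).trans hα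
  have hden : 1 + α * L ≠ 0 := by positivity
  have hp := hgconv.mem_epsSubdiff_zero_of_isMin_prox hgp hprox
  ext ⟨x, v, ε⟩
  simp only [Set.mem_ofPred_eq, Set.mem_singleton_iff, Prod.mk.injEq, zero_pow two_ne_zero,
    zero_mul]
  constructor
  · rintro ⟨hε, hsub, hnorm⟩
    obtain ⟨hres, rfl⟩ := (sq_norm_add_mul_le_zero_iff hα₀ hε).mp hnorm
    have hv : v = (1 / α) • (y - x) := by
      rw [one_div, eq_inv_smul_iff₀ hα₀.ne', ← sub_eq_zero, ← hres]
      abel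
    rw [hv, one_div_smul_sub_sub_smul_sub_sub_eq hα₀.ne' hden] at hsub
    obtain rfl := hgp.eq_of_mem_epsSubdiff_zero_prox (by positivity) hsub hp
    exact ⟨rfl, hv, rfl⟩
  · rintro ⟨rfl, rfl, rfl⟩
    refine ⟨le_rfl, by rwa [one_div_smul_sub_sub_smul_sub_sub_eq hα₀.ne' hden], ?_⟩
    rw [smul_smul, mul_one_div_cancel hα₀.ne', one_smul]
    simp

/-- With `σ = 0` the IER rule forces `ε = 0`, `v = (1/α)(y - x̃)` and
`x̃ = Prox_{λ g}(y - λ ∇f(y))` with `λ = α/(1 + αL)`; i.e. `J_e^{α,0}(y, 1/L)` is a singleton. -/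
theorem IER_rule_sigma_zero_singleton {E : Type*} [NormedAddCommGroup E] [InnerProductSpace ℝ E]
    [FiniteDimensional ℝ E]
    (L α σ : ℝ) (hL : 0 < L) (hα : 1 / L < α) (hσ : σ = 0)
    (f : E → ℝ) (f' : E → E) (hfconv : ConvexOn ℝ Set.univ f)
    (hgrad : ∀ x : E, HasGradientAt f (f' x) x)
    (hlip : ∀ x y : E, ‖f' x - f' y‖ ≤ L * ‖x - y‖)
    (g : E → EReal) (hgp : ProperFn g) (hglsc : LowerSemicontinuous g) (hgconv : ConvexFn g)
    (y p : E)
    (hprox : ∀ z : E,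
        g p + ((1 / (2 * (α / (1 + α * L)))
            * ‖p - (y - (α / (1 + α * L)) • f' y)‖ ^ 2 : ℝ) : EReal)
        ≤ g z + ((1 / (2 * (α / (1 + α * L)))
            * ‖z - (y - (α / (1 + α * L)) • f' y)‖ ^ 2 : ℝ) : EReal)) :
    {q : E × E × ℝ | 0 ≤ q.2.2 ∧
        q.2.1 - L • (q.1 - y) - f' y ∈ epsSubdiff g q.2.2 q.1 ∧
        ‖α • q.2.1 + q.1 - y‖ ^ 2 + 2 * α * q.2.2 ≤ σ ^ 2 * ‖q.1 - y‖ ^ 2}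
      = {(p, (1 / α) • (y - p), (0 : ℝ))} :=
  IER_rule_sigma_zero_singleton_general L α σ hL hα hσ f' g hgp hgconv y p hprox
end

section
/- For the sequence generated by I-FISTA, the objective gap satisfies F(x_k) - F* ≤ 2L d_0² / (τ(k+1)²) for all k ≥ 1, where d_0 is the distance from x_0 to the solution set. -/
/-!
One inexact proximal-gradient step gives, for every `z` at which `g` is finite,
`F(x_k) - F(z) ≤ L/(2τ) (‖y_k - z‖² - ‖x_k - (τ/L) v_k - z‖²)`: the ε-subgradient inequality for
`g`, the gradient inequality for the convex `f` and the descent lemma add up, and the relative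
error condition absorbs both `ε_k` and the inexactness of the step. Taking `z = x_{k-1}` with
weight `t_{k+1}² - t_{k+1} = t_k²` and `z = x_*` with weight `t_{k+1}`, the momentum rule turns
the sum into the statement that
`t_k² (F(x_k) - F*) + L/(2τ) ‖t_k (x_k - (τ/L) v_k) - (t_k - 1) x_{k-1} - x_*‖²`
is nonincreasing. As `t_k ≥ (k+1)/2`, this bounds the gap by `2L‖x_0 - x_*‖²/(τ(k+1)²)` for
every minimizer `x_*`, hence by the same expression in `dist(x_0, S_*)`.
-/

noncomputable section

open Set Topology
open scoped RealInnerProductSpace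

section Gradient

variable {E : Type*} [NormedAddCommGroup E] [InnerProductSpace ℝ E] [CompleteSpace E]
  {f : E → ℝ} {f' : E → E}

theorem HasGradientAt.hasDerivAt_comp_add_smul {φ p d : E} {s : ℝ}
    (h : HasGradientAt f φ (p + s • d)) :
    HasDerivAt (fun r : ℝ => f (p + r • d)) ⟪φ, d⟫ s := by
  have hline : HasDerivAt (fun r : ℝ => p + r • d) d s := by
    simpa using ((hasDerivAt_id s).smul_const d).const_add p
  exact (hasGradientAt_iff_hasFDerivAt.1 h).comp_hasDerivAt s hline

theorem ConvexOn.add_inner_gradient_le (hf : ConvexOn ℝ univ f) {φ y : E}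
    (hφ : HasGradientAt f φ y) (x : E) : f y + ⟪φ, x - y⟫ ≤ f x := by
  have hline : f ∘ AffineMap.lineMap y x = fun r : ℝ => f (y + r • (x - y)) := by
    funext r
    simp [AffineMap.lineMap_apply, add_comm]
  have hconv := hf.comp_affineMap (AffineMap.lineMap y x)
  rw [preimage_univ, hline] at hconv
  have hder : HasDerivAt (fun r : ℝ => f (y + r • (x - y))) ⟪φ, x - y⟫ 0 :=
    HasGradientAt.hasDerivAt_comp_add_smul (by simpa using hφ)
  have := hconv.le_slope_of_hasDerivAt (mem_univ 0) (mem_univ 1) zero_lt_one hder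
  simp only [slope_def_field, one_smul, add_sub_cancel, zero_smul, add_zero, sub_zero, div_one]
    at this
  linarith

theorem apply_le_add_inner_add_of_lipschitz_gradient {L : ℝ}
    (hgrad : ∀ x, HasGradientAt f (f' x) x) (hlip : ∀ x y, ‖f' x - f' y‖ ≤ L * ‖x - y‖)
    (x y : E) : f x ≤ f y + ⟪f' y, x - y⟫ + L / 2 * ‖x - y‖ ^ 2 := by
  set d := x - y with hd
  have hφ : ∀ s : ℝ, HasDerivAt (fun r : ℝ => f (y + r • d) - r * ⟪f' y, d⟫)
      (⟪f' (y + s • d), d⟫ - ⟪f' y, d⟫) s := fun s =>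
    (hgrad _).hasDerivAt_comp_add_smul.sub (hasDerivAt_mul_const ⟪f' y, d⟫)
  have hB : ∀ s : ℝ,
      HasDerivAt (fun r : ℝ => f y + L / 2 * r ^ 2 * ‖d‖ ^ 2) (L * s * ‖d‖ ^ 2) s := fun s =>
    ((((hasDerivAt_pow 2 s).const_mul (L / 2)).mul_const (‖d‖ ^ 2)).const_add (f y)).congr_deriv
      (by push_cast; ring)
  have hbound : ∀ s ∈ Ico (0 : ℝ) 1, ⟪f' (y + s • d), d⟫ - ⟪f' y, d⟫ ≤ L * s * ‖d‖ ^ 2 := by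
    intro s hs
    calc ⟪f' (y + s • d), d⟫ - ⟪f' y, d⟫ = ⟪f' (y + s • d) - f' y, d⟫ := (inner_sub_left ..).symm
      _ ≤ ‖f' (y + s • d) - f' y‖ * ‖d‖ := real_inner_le_norm _ _
      _ ≤ L * ‖s • d‖ * ‖d‖ := by gcongr; simpa using hlip (y + s • d) y
      _ = L * s * ‖d‖ ^ 2 := by rw [norm_smul, Real.norm_of_nonneg hs.1]; ring
  have := image_le_of_deriv_right_le_deriv_boundary
    (fun s _ => (hφ s).continuousAt.continuousWithinAt) (fun s _ => (hφ s).hasDerivWithinAt)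
    (by simp) (fun s _ => (hB s).continuousAt.continuousWithinAt)
    (fun s _ => (hB s).hasDerivWithinAt) hbound (right_mem_Icc.2 zero_le_one)
  simp only [one_smul, one_mul, one_pow, mul_one, hd, add_sub_cancel] at this
  linarith

end Gradient

section InexactProximalStep

variable {E : Type*} [NormedAddCommGroup E] [InnerProductSpace ℝ E]

theorem le_of_mem_epsSubdiff {g : E → EReal} {ε : ℝ} {u x z : E} {a b : ℝ}
    (hu : u ∈ epsSubdiff g ε x) (hx : g x = a) (hz : g z = b) :
    a + ⟪u, z - x⟫ - ε ≤ b := by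
  have := hu z
  rw [hx, hz, ← EReal.coe_add, EReal.coe_le_coe_iff] at this
  linarith

theorem inner_add_le_of_relative_error {L τ ε : ℝ} (hL : 0 < L) (hτ : 0 < τ) {x y v z : E}
    (herr : ‖τ • v‖ ^ 2 + 2 * τ * ε * L ≤ (1 - τ) * L ^ 2 * ‖x - y‖ ^ 2) :
    ⟪v - (L / τ) • (x - y), x - z⟫ + L / 2 * ‖x - y‖ ^ 2 + ε ≤
      L / (2 * τ) * (‖y - z‖ ^ 2 - ‖x - (τ / L) • v - z‖ ^ 2) := by
  have hexpand : L / (2 * τ) * (‖y - z‖ ^ 2 - ‖x - (τ / L) • v - z‖ ^ 2) =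
      ⟪v - (L / τ) • (x - y), x - z⟫ + L / (2 * τ) * ‖x - y‖ ^ 2 - τ / (2 * L) * ‖v‖ ^ 2 := by
    simp only [← real_inner_self_eq_norm_sq, inner_sub_left, inner_sub_right, real_inner_smul_left,
      real_inner_smul_right, real_inner_comm x y, real_inner_comm x z, real_inner_comm x v,
      real_inner_comm y z, real_inner_comm z v]
    field_simp
    ring
  rw [norm_smul, Real.norm_eq_abs, mul_pow, sq_abs] at herr
  have hε : ε + L / 2 * ‖x - y‖ ^ 2 ≤ L / (2 * τ) * ‖x - y‖ ^ 2 - τ / (2 * L) * ‖v‖ ^ 2 := by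
    rw [← sub_nonneg]
    have : L / (2 * τ) * ‖x - y‖ ^ 2 - τ / (2 * L) * ‖v‖ ^ 2 - (ε + L / 2 * ‖x - y‖ ^ 2) =
        ((1 - τ) * L ^ 2 * ‖x - y‖ ^ 2 - (τ ^ 2 * ‖v‖ ^ 2 + 2 * τ * ε * L)) / (2 * τ * L) := by
      field_simp
      ring
    rw [this]
    exact div_nonneg (by linarith) (by positivity)
  linarith

theorem inexact_prox_grad_step_le [CompleteSpace E] {L τ ε : ℝ} (hL : 0 < L) (hτ : 0 < τ)
    {f : E → ℝ} {f' : E → E} (hfconv : ConvexOn ℝ univ f)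
    (hgrad : ∀ x, HasGradientAt f (f' x) x) (hlip : ∀ x y, ‖f' x - f' y‖ ≤ L * ‖x - y‖)
    {g : E → EReal} {x y v z : E} {gx gz : ℝ} (hgx : g x = gx) (hgz : g z = gz)
    (hincl : v - (L / τ) • (x - y) - f' y ∈ epsSubdiff g ε x)
    (herr : ‖τ • v‖ ^ 2 + 2 * τ * ε * L ≤ (1 - τ) * L ^ 2 * ‖x - y‖ ^ 2) :
    f x + gx - (f z + gz) ≤ L / (2 * τ) * (‖y - z‖ ^ 2 - ‖x - (τ / L) • v - z‖ ^ 2) := by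
  have hg := le_of_mem_epsSubdiff hincl hgx hgz
  have hfz := hfconv.add_inner_gradient_le (hgrad y) z
  have hfx := apply_le_add_inner_add_of_lipschitz_gradient hgrad hlip x y
  have hinner : ⟪v - (L / τ) • (x - y) - f' y, z - x⟫ =
      ⟪f' y, x - y⟫ - ⟪f' y, z - y⟫ - ⟪v - (L / τ) • (x - y), x - z⟫ := by
    rw [← inner_sub_right, show x - y - (z - y) = -(z - x) by abel, inner_neg_right,
      inner_sub_left, ← neg_sub x z, inner_neg_right]
    ring
  linarith [inner_add_le_of_relative_error (z := z) hL hτ herr]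

end InexactProximalStep

theorem fista_step_sq_sub (a : ℝ) :
    ((1 + √(1 + 4 * a ^ 2)) / 2) ^ 2 - (1 + √(1 + 4 * a ^ 2)) / 2 = a ^ 2 := by
  linear_combination (1 / 4) * Real.sq_sqrt (by positivity : (0 : ℝ) ≤ 1 + 4 * a ^ 2)

theorem fista_step_ge (a : ℝ) : a + 1 / 2 ≤ (1 + √(1 + 4 * a ^ 2)) / 2 := by
  have : 2 * a ≤ √(1 + 4 * a ^ 2) := Real.le_sqrt_of_sq_le (by nlinarith)
  linarith

theorem fista_momentum_ge {t : ℕ → ℝ} (ht1 : t 1 = 1)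
    (htrec : ∀ k, 1 ≤ k → t (k + 1) = (1 + √(1 + 4 * t k ^ 2)) / 2) :
    ∀ k : ℕ, 1 ≤ k → ((k : ℝ) + 1) / 2 ≤ t k := by
  intro k hk
  induction k, hk using Nat.le_induction with
  | base => norm_num [ht1]
  | succ k hk ih =>
    rw [htrec k hk]
    push_cast
    linarith [fista_step_ge (t k)]

section EstimateSequence

variable {E : Type*} [NormedAddCommGroup E] [InnerProductSpace ℝ E]

theorem smul_momentum_update {s q β : ℝ} (hs : s ≠ 0) (x x₀ v : E) :
    s • (x - ((q / s) * β) • v + ((q - 1) / s) • (x - x₀)) - (s - 1) • x =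
      q • (x - β • v) - (q - 1) • x₀ := by
  simp only [smul_add, smul_sub, smul_smul, mul_div_cancel₀ _ hs, ← mul_assoc]
  module

theorem norm_sq_affine_sub_norm_sq_affine (s : ℝ) (c c' a b : E) :
    s * (s - 1) * (‖c - a‖ ^ 2 - ‖c' - a‖ ^ 2) + s * (‖c - b‖ ^ 2 - ‖c' - b‖ ^ 2) =
      ‖s • c - (s - 1) • a - b‖ ^ 2 - ‖s • c' - (s - 1) • a - b‖ ^ 2 := by
  simp only [← real_inner_self_eq_norm_sq, inner_sub_left, inner_sub_right, real_inner_smul_left,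
    real_inner_smul_right, real_inner_comm a c, real_inner_comm b c, real_inner_comm a c',
    real_inner_comm b c', real_inner_comm b a]
  ring

theorem fista_potential_step {C s q δ δ' : ℝ} (hs : 0 ≤ s) (hq : s ^ 2 - s = q ^ 2)
    {c c' a b : E}
    (hprev : δ' - δ ≤ C * (‖c - a‖ ^ 2 - ‖c' - a‖ ^ 2))
    (hopt : δ' ≤ C * (‖c - b‖ ^ 2 - ‖c' - b‖ ^ 2)) :
    s ^ 2 * δ' + C * ‖s • c' - (s - 1) • a - b‖ ^ 2 ≤
      q ^ 2 * δ + C * ‖s • c - (s - 1) • a - b‖ ^ 2 := by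
  have h₁ := mul_le_mul_of_nonneg_left hprev (hq ▸ sq_nonneg q : 0 ≤ s ^ 2 - s)
  have h₂ := mul_le_mul_of_nonneg_left hopt hs
  have hsplit : s ^ 2 * δ' - q ^ 2 * δ = (s ^ 2 - s) * (δ' - δ) + s * δ' := by
    rw [← hq]; ring
  have hid : (s ^ 2 - s) * (C * (‖c - a‖ ^ 2 - ‖c' - a‖ ^ 2)) +
      s * (C * (‖c - b‖ ^ 2 - ‖c' - b‖ ^ 2)) =
      C * (‖s • c - (s - 1) • a - b‖ ^ 2 - ‖s • c' - (s - 1) • a - b‖ ^ 2) := by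
    rw [← norm_sq_affine_sub_norm_sq_affine]; ring
  linarith

variable {C β : ℝ} {x y v : ℕ → E} {t δ : ℕ → ℝ} {xs : E}
  (ht1 : t 1 = 1) (htrec : ∀ k, 1 ≤ k → t (k + 1) = (1 + √(1 + 4 * t k ^ 2)) / 2)
  (hy1 : y 1 = x 0)
  (hy : ∀ k, 1 ≤ k → y (k + 1) =
    x k - ((t k / t (k + 1)) * β) • v k + ((t k - 1) / t (k + 1)) • (x k - x (k - 1)))
  (hprev : ∀ k, 1 ≤ k →
    δ (k + 1) - δ k ≤ C * (‖y (k + 1) - x k‖ ^ 2 - ‖x (k + 1) - β • v (k + 1) - x k‖ ^ 2))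
  (hopt : ∀ k, 1 ≤ k → δ k ≤ C * (‖y k - xs‖ ^ 2 - ‖x k - β • v k - xs‖ ^ 2))
include ht1 htrec hy1 hy hprev hopt

theorem fista_potential_le :
    ∀ k, 1 ≤ k → t k ^ 2 * δ k + C * ‖t k • (x k - β • v k) - (t k - 1) • x (k - 1) - xs‖ ^ 2 ≤
      C * ‖x 0 - xs‖ ^ 2 := by
  intro k hk
  induction k, hk using Nat.le_induction with
  | base =>
    have h := hopt 1 le_rfl
    rw [hy1] at h
    simp only [ht1, one_pow, one_mul, one_smul, sub_self, zero_smul, sub_zero]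
    linarith
  | succ k hk ih =>
    have hs : 0 < t (k + 1) :=
      (by positivity : (0 : ℝ) < (((k + 1 : ℕ) : ℝ) + 1) / 2).trans_le
        (fista_momentum_ge ht1 htrec (k + 1) (by omega))
    have hq : t (k + 1) ^ 2 - t (k + 1) = t k ^ 2 := by rw [htrec k hk, fista_step_sq_sub]
    have := fista_potential_step hs.le hq (hprev k hk) (hopt (k + 1) (by omega))
    rw [hy k hk, smul_momentum_update hs.ne'] at this
    simpa using this.trans ih

theorem fista_gap_le (hC : 0 ≤ C) (hδ : ∀ k, 1 ≤ k → 0 ≤ δ k) :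
    ∀ k : ℕ, 1 ≤ k → δ k ≤ 4 * C / ((k : ℝ) + 1) ^ 2 * ‖x 0 - xs‖ ^ 2 := by
  intro k hk
  have hpot := fista_potential_le ht1 htrec hy1 hy hprev hopt k hk
  have ht : (((k : ℝ) + 1) / 2) ^ 2 ≤ t k ^ 2 := by
    have := fista_momentum_ge ht1 htrec k hk
    gcongr
  have hk' : (0 : ℝ) < ((k : ℝ) + 1) ^ 2 := by positivity
  rw [div_mul_eq_mul_div, le_div_iff₀ hk']
  nlinarith [mul_le_mul_of_nonneg_right ht (hδ k hk),
    sq_nonneg ‖t k • (x k - β • v k) - (t k - 1) • x (k - 1) - xs‖]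

end EstimateSequence

theorem le_mul_infDist_sq {X : Type*} [PseudoMetricSpace X] {x : X} {s : Set X} (hs : s.Nonempty)
    {a C : ℝ} (hC : 0 ≤ C) (h : ∀ y ∈ s, a ≤ C * dist x y ^ 2) :
    a ≤ C * Metric.infDist x s ^ 2 := by
  have hlt : ∀ r, Metric.infDist x s < r → a ≤ C * r ^ 2 := by
    intro r hr
    obtain ⟨y, hy, hxy⟩ := (Metric.infDist_lt_iff hs).1 hr
    calc a ≤ C * dist x y ^ 2 := h y hy
      _ ≤ C * r ^ 2 := by gcongr
  exact ge_of_tendsto (x := 𝓝[>] (Metric.infDist x s))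
    (((continuous_const.mul (continuous_pow 2)).tendsto _).mono_left nhdsWithin_le_nhds)
    (eventually_nhdsWithin_of_forall hlt)

theorem EReal.eq_coe_sub_of_coe_add_eq_coe {a c : ℝ} {b : EReal} (h : (a : EReal) + b = c) :
    b = ((c - a : ℝ) : EReal) := by
  induction b with
  | bot => simp at h
  | top => simp at h
  | coe b =>
    norm_cast at h ⊢
    linarith

theorem IFISTA_rate_general {E : Type*} [NormedAddCommGroup E] [InnerProductSpace ℝ E]
    [FiniteDimensional ℝ E]
    (L τ α : ℝ) (hL : 0 < L) (hτ : 0 < τ ∧ τ ≤ 1) (hα : 0 ≤ α ∧ α ≤ L * (1 - τ) / τ)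
    (f : E → ℝ) (f' : E → E) (hfconv : ConvexOn ℝ Set.univ f)
    (hgrad : ∀ x : E, HasGradientAt f (f' x) x)
    (hlip : ∀ x y : E, ‖f' x - f' y‖ ≤ L * ‖x - y‖)
    (g : E → EReal) (hgp : ProperFn g)
    (x y v : ℕ → E) (ε t : ℕ → ℝ)
    (ht1 : t 1 = 1) (hy1 : y 1 = x 0)
    (htrec : ∀ k : ℕ, 1 ≤ k → t (k + 1) = (1 + Real.sqrt (1 + 4 * t k ^ 2)) / 2)
    (hincl : ∀ k : ℕ, 1 ≤ k →
        v k - (L / τ) • (x k - y k) - f' (y k) ∈ epsSubdiff g (ε k) (x k))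
    (herr : ∀ k : ℕ, 1 ≤ k →
        ‖τ • v k‖ ^ 2 + 2 * τ * ε k * L ≤ L * ((1 - τ) * L - α * τ) * ‖x k - y k‖ ^ 2)
    (hyrec : ∀ k : ℕ, 1 ≤ k →
        y (k + 1) = x k - ((t k / t (k + 1)) * (τ / L)) • v k
          + ((t k - 1) / t (k + 1)) • (x k - x (k - 1)))
    (Sstar : Set E) (Fstar : ℝ)
    (hS : Sstar = {z : E | ∀ w : E, (f z : EReal) + g z ≤ (f w : EReal) + g w})
    (hSne : Sstar.Nonempty)
    (hFs : ∀ z ∈ Sstar, (f z : EReal) + g z = (Fstar : EReal))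
    (hfin : ∀ k : ℕ, 1 ≤ k → g (x k) ≠ ⊤) :
    ∀ k : ℕ, 1 ≤ k →
      ((f (x k) : EReal) + g (x k)).toReal - Fstar
        ≤ 2 * L / (τ * ((k : ℝ) + 1) ^ 2) * (Metric.infDist (x 0) Sstar) ^ 2 := by
  obtain ⟨hτ0, -⟩ := hτ
  have hgx : ∀ k, 1 ≤ k → g (x k) = ((g (x k)).toReal : EReal) := fun k hk =>
    (EReal.coe_toReal (hfin k hk) (hgp.2 _)).symm
  have hgs : ∀ xs ∈ Sstar, g xs = ((Fstar - f xs : ℝ) : EReal) := fun xs hxs =>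
    EReal.eq_coe_sub_of_coe_add_eq_coe (hFs xs hxs)
  have hgap : ∀ k, 1 ≤ k → 0 ≤ f (x k) + (g (x k)).toReal - Fstar := by
    obtain ⟨xs, hxs⟩ := hSne
    intro k hk
    have := (hS ▸ hxs) (x k)
    rw [hgs xs hxs, hgx k hk] at this
    norm_cast at this
    linarith
  have herr' : ∀ k, 1 ≤ k →
      ‖τ • v k‖ ^ 2 + 2 * τ * ε k * L ≤ (1 - τ) * L ^ 2 * ‖x k - y k‖ ^ 2 := fun k hk => by
    have := mul_nonneg (mul_nonneg (mul_nonneg hL.le hα.1) hτ0.le) (sq_nonneg ‖x k - y k‖)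
    nlinarith [herr k hk]
  have hstep : ∀ k, 1 ≤ k → ∀ z (gz : ℝ), g z = gz → f (x k) + (g (x k)).toReal - (f z + gz) ≤
      L / (2 * τ) * (‖y k - z‖ ^ 2 - ‖x k - (τ / L) • v k - z‖ ^ 2) := fun k hk _ _ hz =>
    inexact_prox_grad_step_le hL hτ0 hfconv hgrad hlip (hgx k hk) hz (hincl k hk) (herr' k hk)
  have hbound : ∀ xs ∈ Sstar, ∀ k, 1 ≤ k → f (x k) + (g (x k)).toReal - Fstar ≤
      4 * (L / (2 * τ)) / ((k : ℝ) + 1) ^ 2 * ‖x 0 - xs‖ ^ 2 := fun xs hxs =>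
    fista_gap_le ht1 htrec hy1 hyrec
      (fun k hk => by linarith [hstep (k + 1) (by omega) (x k) _ (hgx k hk)])
      (fun k hk => by linarith [hstep k hk xs _ (hgs xs hxs)]) (by positivity) hgap
  intro k hk
  rw [hgx k hk, ← EReal.coe_add, EReal.toReal_coe]
  refine le_mul_infDist_sq hSne (by positivity) fun xs hxs => ?_
  convert hbound xs hxs k hk using 2
  · field_simp; ring
  · rw [dist_eq_norm]

/-- Optimal convergence rate of I-FISTA:
`F(x k) - F* ≤ 2 L d₀² / (τ (k+1)²)` for all `k ≥ 1`,
where `d₀` is the distance from `x 0` to the solution set. -/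
theorem IFISTA_rate {E : Type*} [NormedAddCommGroup E] [InnerProductSpace ℝ E]
    [FiniteDimensional ℝ E]
    (L τ α : ℝ) (hL : 0 < L) (hτ : 0 < τ ∧ τ ≤ 1) (hα : 0 ≤ α ∧ α ≤ L * (1 - τ) / τ)
    (f : E → ℝ) (f' : E → E) (hfconv : ConvexOn ℝ Set.univ f)
    (hgrad : ∀ x : E, HasGradientAt f (f' x) x)
    (hlip : ∀ x y : E, ‖f' x - f' y‖ ≤ L * ‖x - y‖)
    (g : E → EReal) (hgp : ProperFn g) (hglsc : LowerSemicontinuous g) (hgconv : ConvexFn g)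
    (x y v : ℕ → E) (ε t : ℕ → ℝ)
    (ht1 : t 1 = 1) (hy1 : y 1 = x 0)
    (htrec : ∀ k : ℕ, 1 ≤ k → t (k + 1) = (1 + Real.sqrt (1 + 4 * t k ^ 2)) / 2)
    (hεk : ∀ k : ℕ, 1 ≤ k → 0 ≤ ε k)
    (hincl : ∀ k : ℕ, 1 ≤ k →
        v k - (L / τ) • (x k - y k) - f' (y k) ∈ epsSubdiff g (ε k) (x k))
    (herr : ∀ k : ℕ, 1 ≤ k →
        ‖τ • v k‖ ^ 2 + 2 * τ * ε k * L ≤ L * ((1 - τ) * L - α * τ) * ‖x k - y k‖ ^ 2)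
    (hyrec : ∀ k : ℕ, 1 ≤ k →
        y (k + 1) = x k - ((t k / t (k + 1)) * (τ / L)) • v k
          + ((t k - 1) / t (k + 1)) • (x k - x (k - 1)))
    (Sstar : Set E) (Fstar : ℝ)
    (hS : Sstar = {z : E | ∀ w : E, (f z : EReal) + g z ≤ (f w : EReal) + g w})
    (hSne : Sstar.Nonempty)
    (hFs : ∀ z ∈ Sstar, (f z : EReal) + g z = (Fstar : EReal))
    (hfin : ∀ k : ℕ, 1 ≤ k → g (x k) ≠ ⊤) :
    ∀ k : ℕ, 1 ≤ k →
      ((f (x k) : EReal) + g (x k)).toReal - Fstar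
        ≤ 2 * L / (τ * ((k : ℝ) + 1) ^ 2) * (Metric.infDist (x 0) Sstar) ^ 2 :=
  IFISTA_rate_general L τ α hL hτ hα f f' hfconv hgrad hlip g hgp x y v ε t ht1 hy1 htrec hincl herr
    hyrec Sstar Fstar hS hSne hFs hfin
end
end

section
/- Suppose (x̃, v, ε) satisfies the IER Rule error bound ‖αv + x̃ - y‖² + 2αε ≤ σ²‖x̃ - y‖² with σ ∈ [0,1], α > 0, ε ≥ 0. Then for every c ∈ E: ⟨v, c - x̃⟩ - ε ≥ ((1 - σ²)/(2α))‖x̃ - y‖² - (1/(2α))‖c - y‖². -/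
noncomputable section

open scoped InnerProductSpace

theorem two_mul_real_inner_sub_eq {F : Type*} [NormedAddCommGroup F] [InnerProductSpace ℝ F]
    (a p q : F) :
    2 * ⟪a, p - q⟫_ℝ = ‖a + p‖ ^ 2 - ‖a + q‖ ^ 2 - ‖p‖ ^ 2 + ‖q‖ ^ 2 := by
  rw [norm_add_sq_real, norm_add_sq_real, inner_sub_right]
  ring

theorem norm_sq_sub_norm_add_sq_sub_norm_sq_le {F : Type*} [NormedAddCommGroup F]
    [InnerProductSpace ℝ F] (a p q : F) :
    ‖q‖ ^ 2 - ‖a + q‖ ^ 2 - ‖p‖ ^ 2 ≤ 2 * ⟪a, p - q⟫_ℝ := by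
  rw [two_mul_real_inner_sub_eq]
  linarith [sq_nonneg ‖a + p‖]

theorem IER_error_consequence_general {E : Type*} [NormedAddCommGroup E] [InnerProductSpace ℝ E]
    (α σ ε : ℝ) (hα : 0 < α)
    (y xt v : E)
    (herr : ‖α • v + xt - y‖ ^ 2 + 2 * α * ε ≤ σ ^ 2 * ‖xt - y‖ ^ 2) :
    ∀ c : E, (1 - σ ^ 2) / (2 * α) * ‖xt - y‖ ^ 2 - 1 / (2 * α) * ‖c - y‖ ^ 2
      ≤ (inner ℝ v (c - xt) : ℝ) - ε := by
  intro c
  have hcross : ‖xt - y‖ ^ 2 - ‖α • v + xt - y‖ ^ 2 - ‖c - y‖ ^ 2 ≤ 2 * α * ⟪v, c - xt⟫_ℝ := by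
    have h := norm_sq_sub_norm_add_sq_sub_norm_sq_le (α • v) (c - y) (xt - y)
    rwa [sub_sub_sub_cancel_right, real_inner_smul_left, ← add_sub_assoc, ← mul_assoc] at h
  rw [div_mul_eq_mul_div, div_mul_eq_mul_div, div_sub_div_same, div_le_iff₀ (by positivity)]
  linarith

/-- Consequence of the IER error bound: if `‖α v + x̃ - y‖² + 2αε ≤ σ²‖x̃ - y‖²`, then for
every `c`, `⟨v, c - x̃⟩ - ε ≥ ((1 - σ²)/(2α))‖x̃ - y‖² - (1/(2α))‖c - y‖²`. -/
theorem IER_error_consequence {E : Type*} [NormedAddCommGroup E] [InnerProductSpace ℝ E]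
    [FiniteDimensional ℝ E]
    (α σ ε : ℝ) (hα : 0 < α) (hσ : σ ∈ Set.Icc (0 : ℝ) 1) (hε : 0 ≤ ε)
    (y xt v : E)
    (herr : ‖α • v + xt - y‖ ^ 2 + 2 * α * ε ≤ σ ^ 2 * ‖xt - y‖ ^ 2) :
    ∀ c : E, (1 - σ ^ 2) / (2 * α) * ‖xt - y‖ ^ 2 - 1 / (2 * α) * ‖c - y‖ ^ 2
      ≤ (inner ℝ v (c - xt) : ℝ) - ε :=
  IER_error_consequence_general α σ ε hα y xt v herr
end
end
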